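/- Let k ≥ 1, let y be an aperiodic infinite binary word, and let x = φ^k(y). Then for every j with 1 ≤ j ≤ k, there exist infinitely many n ∈ ℕ with b^(j)_x(n) < b^(j+1)_x(n). -/

import Mathlib

/-- The number of occurrences of `w` as a (scattered) subword of `u`:
the binomial coefficient of the words `u` and `w`. -/
def wordBinom {A : Type*} [DecidableEq A] (u w : List A) : ℕ := u.sublists.count w

/-- `k`-binomial equivalence of finite words: all binomial coefficients with respect to
words of length at most `k` agree. -/
def BinEquiv {A : Type*} [DecidableEq A] (k : ℕ) (u v : List A) : Prop :=
  ∀ x : List A, x.length ≤ k → wordBinom u x = wordBinom v x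

/-- `k`-binomial equivalence as a setoid. -/
def binSetoid (A : Type*) [DecidableEq A] (k : ℕ) : Setoid (List A) where
  r := BinEquiv k
  iseqv := ⟨fun _ _ _ => rfl, fun h x hx => (h x hx).symm,
    fun h h' x hx => (h x hx).trans (h' x hx)⟩

/-- `u` occurs in the infinite word `x` at position `i`. -/
def OccursAt {A : Type*} (u : List A) (x : ℕ → A) (i : ℕ) : Prop :=
  u = (List.range u.length).map (fun j => x (i + j))

/-- `u` is a factor of the infinite word `x`. -/
def FactorOf {A : Type*} (u : List A) (x : ℕ → A) : Prop := ∃ i, OccursAt u x i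

/-- The set of length-`n` factors of `x`. -/
def Fac {A : Type*} (x : ℕ → A) (n : ℕ) : Set (List A) :=
  {u | u.length = n ∧ FactorOf u x}

/-- Factor complexity of an infinite word. -/
noncomputable def fc {A : Type*} (x : ℕ → A) (n : ℕ) : ℕ := (Fac x n).ncard

/-- `k`-binomial complexity of an infinite word: the number of `k`-binomial equivalence
classes of length-`n` factors. -/
noncomputable def bc {A : Type*} [DecidableEq A] (x : ℕ → A) (k n : ℕ) : ℕ :=
  (Quotient.mk (binSetoid A k) '' Fac x n).ncard

/-- The Thue–Morse morphism `φ : 0 ↦ 01, 1 ↦ 10`. -/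
def phi : Fin 2 → List (Fin 2) := fun a => if a = 0 then [0, 1] else [1, 0]

/-- The Thue–Morse morphism applied to a finite word. -/
def phiW : List (Fin 2) → List (Fin 2) := fun u => (u.map phi).flatten

/-- The `k`-th power `φ^k` of the Thue–Morse morphism, on finite words. -/
def phiPow (k : ℕ) : List (Fin 2) → List (Fin 2) := phiW^[k]

/-- `φ^k` applied to an infinite binary word (note `φ^k` is `2^k`-uniform). -/
def phiPowInf (k : ℕ) (y : ℕ → Fin 2) : ℕ → Fin 2 :=
  fun n => (phiPow k [y (n / 2 ^ k)]).getD (n % 2 ^ k) 0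

/-- The Thue–Morse word `t = 0110100110010110⋯`, `t n` being the parity of the
binary digit sum of `n`. -/
def thueMorse : ℕ → Fin 2 := fun n => Fin.ofNat 2 (Nat.digits 2 n).sum

/-- Ultimately periodic infinite words. -/
def UltPeriodic {A : Type*} (x : ℕ → A) : Prop :=
  ∃ p, 1 ≤ p ∧ ∃ N, ∀ n, N ≤ n → x (n + p) = x n

/-!
Write `x = φ^j(z)` with `z = φ^(k-j)(y)`, again aperiodic. For every `m ≥ 1` some `i` has
`z i ≠ z (i + m)`, so the length-`m` factors of `z` at `i` and `i + 1` differ in their number of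
`1`s. Their images under `φ^j`, factors of `x` of length `2^j m`, are `j`-binomially equivalent
since `φ^j(0) ∼_j φ^j(1)`, but not `(j+1)`-binomially equivalent. To see this, weight each `1` of
a word by `p^j`, `p` the number of letters after it. The total weight is a `(j+1)`-binomial
invariant, being an integer combination of the sums `∑_{|g| = e} C(u, 1g)` with `e ≤ j`. Up to a
term depending only on the length, `φ` acts on weight functions by `f ↦ (n ↦ f (2n+1) - f (2n))`,
which lowers the degree of a polynomial by one; so `φ^j` turns the weight `p^j` into the constant
`j! 2^(j choose 2)`, and the weights of the two images differ.
-/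

open List

section WordBinom

variable {A : Type*} [DecidableEq A]

lemma count_flatMap_pair_nil (a : A) (L : List (List A)) :
    (L.flatMap fun x => [x, a :: x]).count [] = L.count [] := by
  induction L with
  | nil => rfl
  | cons x L ih => simp [count_cons, ih]

lemma count_flatMap_pair_cons (a b : A) (L : List (List A)) (w : List A) :
    (L.flatMap fun x => [x, a :: x]).count (b :: w) =
      L.count (b :: w) + if b = a then L.count w else 0 := by
  induction L with
  | nil => simp
  | cons x L ih =>
    simp only [flatMap_cons, count_append, ih, count_cons, count_nil, cons_beq_cons, beq_iff_eq]
    by_cases hba : b = a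
    · subst hba; by_cases hx : x = w <;> simp [hx] <;> omega
    · simp [hba, Ne.symm hba]; omega

@[simp]
lemma wordBinom_nil_right (u : List A) : wordBinom u [] = 1 := by
  induction u with
  | nil => rfl
  | cons a u ih => rwa [wordBinom, sublists_cons, bind_eq_flatMap, count_flatMap_pair_nil]

@[simp]
lemma wordBinom_nil_cons (b : A) (w : List A) : wordBinom [] (b :: w) = 0 := rfl

lemma wordBinom_cons_cons (a b : A) (u w : List A) :
    wordBinom (a :: u) (b :: w) = wordBinom u (b :: w) + if b = a then wordBinom u w else 0 := by
  rw [wordBinom, sublists_cons, bind_eq_flatMap, count_flatMap_pair_cons]; rfl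

lemma wordBinom_nil_left (w : List A) : wordBinom [] w = if w = [] then 1 else 0 := by
  cases w <;> simp

lemma wordBinom_append (u v w : List A) :
    wordBinom (u ++ v) w =
      ∑ t ∈ Finset.range (w.length + 1), wordBinom u (w.take t) * wordBinom v (w.drop t) := by
  induction u generalizing w with
  | nil =>
    rw [Finset.sum_eq_single_of_mem 0 (by simp)]
    · simp
    · intro t ht ht0
      have : w.take t ≠ [] := by simp [take_eq_nil_iff]; grind
      simp [wordBinom_nil_left, this]
  | cons a u ih =>
    cases w with
    | nil => simp
    | cons b w =>
      rw [cons_append, wordBinom_cons_cons, ih, ih]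
      simp only [length_cons, Finset.sum_range_succ' _ (w.length + 1), take_succ_cons,
        drop_succ_cons, take_zero, drop_zero, wordBinom_nil_right, wordBinom_cons_cons, add_mul,
        Finset.sum_add_distrib]
      split_ifs
      · ring
      · simp

lemma BinEquiv.mono {k l : ℕ} {u v : List A} (h : BinEquiv l u v) (hkl : k ≤ l) :
    BinEquiv k u v :=
  fun x hx => h x (hx.trans hkl)

lemma BinEquiv.append {k : ℕ} {u u' v v' : List A} (hu : BinEquiv k u u') (hv : BinEquiv k v v') :
    BinEquiv k (u ++ v) (u' ++ v') := by
  intro x hx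
  rw [wordBinom_append, wordBinom_append]
  refine Finset.sum_congr rfl fun t _ => ?_
  rw [hu _ ((length_take_le' t x).trans hx), hv _ (by simp; omega)]

/-- Only the two extreme terms of the Cauchy formula see factors of length `k + 1`, and they
are the same for `u ++ v` and `v ++ u`. -/
lemma BinEquiv.append_comm {k : ℕ} {u v : List A} (h : BinEquiv k u v) :
    BinEquiv (k + 1) (u ++ v) (v ++ u) := by
  intro x hx
  rw [wordBinom_append, wordBinom_append]
  rcases x with _ | ⟨b, x⟩
  · simp
  rw [length_cons, Finset.sum_range_succ, Finset.sum_range_succ', Finset.sum_range_succ,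
    Finset.sum_range_succ']
  have hmid : ∀ t ∈ Finset.range x.length,
      wordBinom u ((b :: x).take (t + 1)) * wordBinom v ((b :: x).drop (t + 1)) =
        wordBinom v ((b :: x).take (t + 1)) * wordBinom u ((b :: x).drop (t + 1)) := by
    intro t ht
    have ht := Finset.mem_range.mp ht
    simp only [length_cons] at hx
    rw [h _ (by simp; omega), h _ (by simp; omega), mul_comm]
  rw [Finset.sum_congr rfl hmid]
  simp
  ring

end WordBinom

section ThueMorseMorphism

lemma phi_eq (a : Fin 2) : phi a = [a, 1 - a] := by
  fin_cases a <;> rfl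

lemma phiW_cons (a : Fin 2) (u : List (Fin 2)) : phiW (a :: u) = a :: (1 - a) :: phiW u := by
  simp [phiW, phi_eq]

lemma phiW_append (u v : List (Fin 2)) : phiW (u ++ v) = phiW u ++ phiW v := by
  simp [phiW]

lemma length_phiW (u : List (Fin 2)) : (phiW u).length = 2 * u.length := by
  induction u with
  | nil => rfl
  | cons a u ih => simp [phiW_cons, ih]; ring

lemma phiPow_succ (j : ℕ) (u : List (Fin 2)) : phiPow (j + 1) u = phiPow j (phiW u) :=
  Function.iterate_succ_apply phiW j u

lemma phiPow_succ' (j : ℕ) (u : List (Fin 2)) : phiPow (j + 1) u = phiW (phiPow j u) :=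
  Function.iterate_succ_apply' phiW j u

lemma phiPow_nil (j : ℕ) : phiPow j [] = [] :=
  Function.iterate_fixed (f := phiW) rfl j

lemma phiPow_append (j : ℕ) (u v : List (Fin 2)) :
    phiPow j (u ++ v) = phiPow j u ++ phiPow j v := by
  induction j generalizing u v with
  | zero => rfl
  | succ j ih => simp only [phiPow_succ, phiW_append, ih]

lemma length_phiPow (j : ℕ) (u : List (Fin 2)) : (phiPow j u).length = 2 ^ j * u.length := by
  induction j with
  | zero => simp [phiPow]
  | succ j ih => rw [phiPow_succ', length_phiW, ih, pow_succ]; ring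

lemma head?_phiPow (j : ℕ) (u : List (Fin 2)) : (phiPow j u).head? = u.head? := by
  induction j with
  | zero => rfl
  | succ j ih => rw [phiPow_succ', ← ih]; cases phiPow j u <;> simp [phiW_cons]; rfl

lemma binEquiv_phiPow_zero_one (j : ℕ) : BinEquiv j (phiPow j [0]) (phiPow j [1]) := by
  induction j with
  | zero => intro x hx; simp [length_eq_zero_iff.mp (Nat.le_zero.mp hx)]
  | succ j ih =>
    have h := ih.append_comm
    rwa [← phiPow_append, ← phiPow_append] at h

lemma binEquiv_phiPow {w w' : List (Fin 2)} (hlen : w.length = w'.length) (j : ℕ) :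
    BinEquiv j (phiPow j w) (phiPow j w') := by
  induction w generalizing w' with
  | nil => rw [length_eq_zero_iff.mp hlen.symm]; exact fun _ _ => rfl
  | cons a w ih =>
    obtain _ | ⟨b, w'⟩ := w'
    · simp at hlen
    rw [← singleton_append, ← singleton_append (l := w'), phiPow_append, phiPow_append]
    refine BinEquiv.append ?_ (ih (by simpa using hlen))
    fin_cases a <;> fin_cases b
    exacts [fun _ _ => rfl, binEquiv_phiPow_zero_one j,
      fun x hx => (binEquiv_phiPow_zero_one j x hx).symm, fun _ _ => rfl]

end ThueMorseMorphism

lemma pow_eq_sum_stirlingSecond_mul_descFactorial (n d : ℕ) :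
    n ^ d = ∑ e ∈ Finset.range (d + 1), Nat.stirlingSecond d e * n.descFactorial e := by
  induction d with
  | zero => simp
  | succ d ih =>
    have hmul (e : ℕ) :
        n.descFactorial e * n = n.descFactorial (e + 1) + e * n.descFactorial e := by
      rw [Nat.descFactorial_succ]
      rcases le_or_gt e n with h | h
      · rw [← add_mul, Nat.sub_add_cancel h, mul_comm]
      · simp [Nat.descFactorial_eq_zero_iff_lt.mpr h]
    have hshift : ∑ e ∈ Finset.range (d + 1), d.stirlingSecond e * (e * n.descFactorial e) =
        ∑ e ∈ Finset.range (d + 1),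
          (e + 1) * d.stirlingSecond (e + 1) * n.descFactorial (e + 1) := by
      calc _ = ∑ e ∈ Finset.range (d + 1 + 1), d.stirlingSecond e * (e * n.descFactorial e) := by
            rw [Finset.sum_range_succ _ (d + 1), Nat.stirlingSecond_eq_zero_of_lt (lt_add_one d)]
            simp
        _ = _ := by rw [Finset.sum_range_succ']; simp [mul_assoc, mul_left_comm]
    rw [pow_succ, ih, Finset.sum_mul, Finset.sum_range_succ' _ (d + 1)]
    simp only [Nat.stirlingSecond_succ_succ, Nat.stirlingSecond_succ_zero, zero_mul, add_zero,
      mul_assoc, hmul, mul_add, Finset.sum_add_distrib, hshift]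
    rw [← Finset.sum_add_distrib]
    exact Finset.sum_congr rfl fun _ _ => by ring

section WeightOnes

/-- `weightOnes u f` is the sum of `f p` over the occurrences of `1` in `u`, where `p` is the
number of letters of `u` to the right of the occurrence. -/
def weightOnes : List (Fin 2) → (ℕ → ℤ) →ₗ[ℤ] ℤ
  | [] => 0
  | a :: u => weightOnes u + if a = 1 then LinearMap.proj u.length else 0

lemma weightOnes_nil (f : ℕ → ℤ) : weightOnes [] f = 0 := rfl

lemma weightOnes_cons (a : Fin 2) (u : List (Fin 2)) (f : ℕ → ℤ) :
    weightOnes (a :: u) f = weightOnes u f + if a = 1 then f u.length else 0 := by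
  simp only [weightOnes, LinearMap.add_apply]
  split_ifs <;> rfl

lemma weightOnes_const (u : List (Fin 2)) (c : ℤ) : weightOnes u (fun _ => c) = c * u.count 1 := by
  induction u with
  | nil => simp [weightOnes_nil]
  | cons a u ih => rw [weightOnes_cons, ih, count_cons]; split_ifs <;> simp_all; ring

def binWords : ℕ → List (List (Fin 2))
  | 0 => [[]]
  | d + 1 => (binWords d).flatMap fun g => [0 :: g, 1 :: g]

lemma length_of_mem_binWords {d : ℕ} {g : List (Fin 2)} (hg : g ∈ binWords d) : g.length = d := by
  induction d generalizing g with
  | zero => simp_all [binWords]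
  | succ d ih =>
    simp only [binWords, mem_flatMap, mem_cons, not_mem_nil, or_false] at hg
    obtain ⟨g, hg, rfl | rfl⟩ := hg <;> simp [ih hg]

lemma sum_map_binWords_succ {M : Type*} [AddCommMonoid M] (d : ℕ) (F : List (Fin 2) → M) :
    ((binWords (d + 1)).map F).sum = ((binWords d).map fun g => F (0 :: g) + F (1 :: g)).sum := by
  rw [binWords]
  induction binWords d with
  | nil => rfl
  | cons g L ih => simp [ih, add_assoc]

lemma sum_wordBinom_binWords (u : List (Fin 2)) (e : ℕ) :
    ((binWords e).map (wordBinom u)).sum = u.length.choose e := by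
  induction u generalizing e with
  | nil =>
    cases e with
    | zero => rfl
    | succ e =>
      rw [sum_map_binWords_succ]
      simp
  | cons a u ih =>
    cases e with
    | zero => simp [binWords]
    | succ e =>
      have hsplit (g : List (Fin 2)) : wordBinom (a :: u) (0 :: g) + wordBinom (a :: u) (1 :: g) =
          wordBinom u (0 :: g) + wordBinom u (1 :: g) + wordBinom u g := by
        simp only [wordBinom_cons_cons]; fin_cases a <;> simp <;> ring
      rw [sum_map_binWords_succ, map_congr_left fun g _ => hsplit g, sum_map_add,
        ← sum_map_binWords_succ, ih, ih, length_cons, Nat.choose_succ_succ', add_comm]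

lemma sum_wordBinom_one_cons_binWords (u : List (Fin 2)) (e : ℕ) :
    (((binWords e).map fun g => wordBinom u (1 :: g)).sum : ℤ) =
      weightOnes u fun n => (n.choose e : ℤ) := by
  induction u with
  | nil => simp [weightOnes_nil]
  | cons a u ih =>
    simp only [wordBinom_cons_cons, sum_map_add, weightOnes_cons, ← ih, Nat.cast_add,
      eq_comm (a := a)]
    split_ifs
    · rw [sum_wordBinom_binWords]
    · simp

lemma weightOnes_choose_eq_of_binEquiv {e : ℕ} {u v : List (Fin 2)} (h : BinEquiv (e + 1) u v) :
    weightOnes u (fun n => (n.choose e : ℤ)) = weightOnes v (fun n => (n.choose e : ℤ)) := by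
  rw [← sum_wordBinom_one_cons_binWords, ← sum_wordBinom_one_cons_binWords]
  congr 2
  exact map_congr_left fun g hg => h _ (by simp [length_of_mem_binWords hg])

lemma weightOnes_pow_eq_of_binEquiv {j : ℕ} {u v : List (Fin 2)} (h : BinEquiv (j + 1) u v) :
    weightOnes u (fun n => (n : ℤ) ^ j) = weightOnes v (fun n => (n : ℤ) ^ j) := by
  have hpow : (fun n : ℕ => (n : ℤ) ^ j) = ∑ e ∈ Finset.range (j + 1),
      ((j.stirlingSecond e * e.factorial : ℕ) : ℤ) • fun n : ℕ => (n.choose e : ℤ) := by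
    ext n
    simp only [Finset.sum_apply, Pi.smul_apply, smul_eq_mul]
    exact_mod_cast (pow_eq_sum_stirlingSecond_mul_descFactorial n j).trans
      (Finset.sum_congr rfl fun e _ => by rw [Nat.descFactorial_eq_factorial_mul_choose, mul_assoc])
  simp only [hpow, map_sum, map_zsmul]
  exact Finset.sum_congr rfl fun e he =>
    congrArg _ (weightOnes_choose_eq_of_binEquiv (h.mono (by simpa [Nat.lt_succ_iff] using he)))

def pairDiff : Module.End ℤ (ℕ → ℤ) where
  toFun f n := f (2 * n + 1) - f (2 * n)
  map_add' f g := by ext n; simp only [Pi.add_apply]; ring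
  map_smul' c f := by ext n; simp only [Pi.smul_apply, smul_eq_mul, RingHom.id_apply]; ring

lemma pairDiff_apply (f : ℕ → ℤ) (n : ℕ) : pairDiff f n = f (2 * n + 1) - f (2 * n) := rfl

lemma weightOnes_phiW (u : List (Fin 2)) (f : ℕ → ℤ) :
    weightOnes (phiW u) f = ∑ i ∈ Finset.range u.length, f (2 * i) + weightOnes u (pairDiff f) := by
  induction u with
  | nil => rfl
  | cons a u ih =>
    rw [phiW_cons, weightOnes_cons, weightOnes_cons, weightOnes_cons, ih, length_cons,
      length_cons, length_phiW, Finset.sum_range_succ, pairDiff_apply]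
    fin_cases a <;> simp <;> ring

lemma weightOnes_phiPow_sub {w w' : List (Fin 2)} (hlen : w.length = w'.length) (j : ℕ)
    (f : ℕ → ℤ) :
    weightOnes (phiPow j w) f - weightOnes (phiPow j w') f =
      weightOnes w ((pairDiff ^ j) f) - weightOnes w' ((pairDiff ^ j) f) := by
  induction j generalizing f with
  | zero => rfl
  | succ j ih =>
    rw [phiPow_succ', phiPow_succ', weightOnes_phiW, weightOnes_phiW, length_phiPow,
      length_phiPow, hlen, add_sub_add_left_eq_sub, ih, pow_succ, Module.End.mul_apply]

lemma pairDiff_pow (d : ℕ) :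
    pairDiff (fun n => (n : ℤ) ^ d) =
      ∑ e ∈ Finset.range d, ((d.choose e * 2 ^ e : ℕ) : ℤ) • fun n : ℕ => (n : ℤ) ^ e := by
  ext n
  simp only [pairDiff_apply, Finset.sum_apply, Pi.smul_apply, smul_eq_mul]
  push_cast
  rw [add_pow, Finset.sum_range_succ, Nat.choose_self]
  simp only [one_pow, mul_one, Nat.cast_one, add_sub_cancel_right]
  exact Finset.sum_congr rfl fun e _ => by ring

lemma pow_pairDiff_apply_pow (d : ℕ) : ∀ e ≤ d, (pairDiff ^ d) (fun n => (n : ℤ) ^ e) =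
    if e = d then fun _ => ((d.factorial * 2 ^ d.choose 2 : ℕ) : ℤ) else (0 : ℕ → ℤ) := by
  induction d with
  | zero => intro e he; obtain rfl := Nat.le_zero.mp he; ext; simp
  | succ d ih =>
    intro e he
    rw [pow_succ, Module.End.mul_apply, pairDiff_pow, map_sum]
    simp only [map_zsmul]
    rw [Finset.sum_congr rfl fun e' he' => by rw [ih e' (by simp at he'; omega)]]
    simp only [smul_ite, smul_zero]
    rcases he.eq_or_lt with rfl | hlt
    · rw [Finset.sum_ite_eq', if_pos (Finset.self_mem_range_succ d), if_pos rfl]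
      ext
      simp only [Pi.smul_apply, smul_eq_mul, Nat.choose_succ_self_right, Nat.factorial_succ,
        Nat.choose_succ_succ' d 1, Nat.choose_one_right]
      push_cast
      ring
    · rw [if_neg hlt.ne]
      refine Finset.sum_eq_zero fun e' he' => ?_
      rw [if_neg (by simp at he'; omega)]

lemma not_binEquiv_phiPow {w w' : List (Fin 2)} (hlen : w.length = w'.length)
    (hcount : w.count 1 ≠ w'.count 1) (j : ℕ) :
    ¬ BinEquiv (j + 1) (phiPow j w) (phiPow j w') := by
  intro h
  have key := weightOnes_phiPow_sub hlen j (fun n => (n : ℤ) ^ j)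
  rw [weightOnes_pow_eq_of_binEquiv h, sub_self, pow_pairDiff_apply_pow j j le_rfl, if_pos rfl,
    weightOnes_const, weightOnes_const, ← mul_sub, eq_comm, mul_eq_zero, sub_eq_zero] at key
  rcases key with hzero | heq
  · exact absurd hzero (by positivity)
  · exact hcount (by exact_mod_cast heq)

end WeightOnes

section InfiniteWords

lemma map_range_phiPowInf (k : ℕ) (y : ℕ → Fin 2) (m : ℕ) :
    (range (2 ^ k * m)).map (phiPowInf k y) = phiPow k ((range m).map y) := by
  induction m with
  | zero => simp [phiPow_nil]
  | succ m ih =>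
    rw [mul_add_one, range_add, map_append, ih, range_succ, map_append, phiPow_append,
      map_singleton]
    congr 1
    refine ext_getElem (by simp [length_phiPow]) fun r hr hr' => ?_
    have hr : r < 2 ^ k := by simpa using hr
    simp [phiPowInf, Nat.mul_add_div (Nat.two_pow_pos k), Nat.div_eq_of_lt hr, Nat.mod_eq_of_lt hr,
      getElem?_eq_getElem hr']

lemma phiPowInf_add (j c : ℕ) (y : ℕ → Fin 2) :
    phiPowInf (j + c) y = phiPowInf j (phiPowInf c y) := by
  funext n
  have hprefix : (range (2 ^ (j + c) * (n + 1))).map (phiPowInf (j + c) y) =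
      (range (2 ^ (j + c) * (n + 1))).map (phiPowInf j (phiPowInf c y)) := by
    rw [map_range_phiPowInf, pow_add, mul_assoc, map_range_phiPowInf, map_range_phiPowInf,
      phiPow, phiPow, phiPow, Function.iterate_add_apply]
  refine map_inj_left.mp hprefix n (mem_range.mpr ?_)
  calc n < n + 1 := lt_add_one n
    _ ≤ 2 ^ (j + c) * (n + 1) := Nat.le_mul_of_pos_left _ (Nat.two_pow_pos _)

lemma occursAt_of_map_range_eq {A : Type*} {x : ℕ → A} {N : ℕ} {u v w : List A}
    (h : (range N).map x = u ++ w ++ v) : OccursAt w x u.length := by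
  refine ext_getElem (by simp) fun t ht _ => ?_
  have hN : u.length + t < N := by
    have := congrArg length h
    simp only [length_map, length_range, length_append] at this
    omega
  have hget := congrArg (·[u.length + t]?) h
  simp [getElem?_append, hN, ht] at hget
  simp [hget]

lemma phiPow_mem_Fac {z : ℕ → Fin 2} {w : List (Fin 2)} {n : ℕ} (hw : w ∈ Fac z n) (j : ℕ) :
    phiPow j w ∈ Fac (phiPowInf j z) (2 ^ j * n) := by
  obtain ⟨rfl, i, hocc⟩ := hw
  refine ⟨length_phiPow j w, 2 ^ j * i, ?_⟩
  have hsplit : (range (i + w.length)).map z = (range i).map z ++ w := by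
    rw [range_add, map_append, map_map]
    exact congrArg _ hocc.symm
  have h := map_range_phiPowInf j z (i + w.length)
  rw [hsplit, phiPow_append, ← append_nil (_ ++ _)] at h
  simpa [length_phiPow] using occursAt_of_map_range_eq h
lemma phiPowInf_two_pow_mul (k : ℕ) (y : ℕ → Fin 2) (n : ℕ) : phiPowInf k y (2 ^ k * n) = y n := by
  have h := head?_phiPow k [y n]
  rw [head?_eq_getElem?] at h
  simp [phiPowInf, Nat.mul_div_cancel_left n (Nat.two_pow_pos k), getD_eq_getElem?_getD, h]

lemma UltPeriodic.comp_mul {A : Type*} {x : ℕ → A} (hx : UltPeriodic x) {a : ℕ} (ha : 0 < a) :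
    UltPeriodic fun n => x (a * n) := by
  obtain ⟨p, hp, N, hN⟩ := hx
  have hiter (q n : ℕ) (hn : N ≤ n) : x (n + p * q) = x n := by
    induction q with
    | zero => simp
    | succ q ih => rw [mul_add_one, ← add_assoc, hN _ (by omega), ih]
  refine ⟨p, hp, N, fun n hn => ?_⟩
  show x (a * (n + p)) = x (a * n)
  rw [mul_add, mul_comm a p]
  exact hiter a (a * n) (hn.trans (Nat.le_mul_of_pos_left n ha))

lemma not_ultPeriodic_phiPowInf (k : ℕ) {y : ℕ → Fin 2} (hy : ¬ UltPeriodic y) :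
    ¬ UltPeriodic (phiPowInf k y) := fun h => hy <| by
  simpa [phiPowInf_two_pow_mul] using h.comp_mul (Nat.two_pow_pos k)

lemma map_range'_mem_Fac {A : Type*} (x : ℕ → A) (i n : ℕ) : (range' i n).map x ∈ Fac x n :=
  ⟨by simp, i, by simp [OccursAt, range'_eq_map_range]⟩

lemma count_map_range'_ne_of_ne (z : ℕ → Fin 2) {i n : ℕ} (h : z i ≠ z (i + n)) :
    ((range' i n).map z).count 1 ≠ ((range' (i + 1) n).map z).count 1 := by
  cases n with
  | zero => simp at h
  | succ n =>
    rw [range'_succ, range'_concat, map_cons, map_append, count_cons, count_append, map_singleton,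
      count_singleton, one_mul, show i + 1 + n = i + (n + 1) by omega]
    have h2 (a : Fin 2) : a = 0 ∨ a = 1 := by fin_cases a <;> simp
    rcases h2 (z i) with h₁ | h₁ <;> rcases h2 (z (i + (n + 1))) with h₂ | h₂ <;> simp_all

end InfiniteWords

lemma ncard_image_mk_lt_of_not_rel {α : Type*} {r s : Setoid α} (hrs : r ≤ s) {S : Set α}
    (hS : S.Finite) {a b : α} (ha : a ∈ S) (hb : b ∈ S) (hab : s a b) (hnab : ¬ r a b) :
    (Quotient.mk s '' S).ncard < (Quotient.mk r '' S).ncard := by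
  let π : Quotient r → Quotient s := Quotient.map' id hrs
  have himage : Quotient.mk s '' S = π '' (Quotient.mk r '' S) := by
    rw [← Set.image_comp]; rfl
  have hnot_inj : ¬ Set.InjOn π (Quotient.mk r '' S) := fun hinj =>
    hnab (Quotient.exact (hinj ⟨a, ha, rfl⟩ ⟨b, hb, rfl⟩ (Quotient.sound hab)))
  rw [himage]
  exact (Set.ncard_image_le (hS.image _)).lt_of_ne fun h =>
    hnot_inj (Set.injOn_of_ncard_image_eq h (hS.image _))

lemma bc_lt_bc_succ_of_not_binEquiv {x : ℕ → Fin 2} {j n : ℕ} {u v : List (Fin 2)}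
    (hu : u ∈ Fac x n) (hv : v ∈ Fac x n) (hj : BinEquiv j u v) (hj' : ¬ BinEquiv (j + 1) u v) :
    bc x j n < bc x (j + 1) n :=
  ncard_image_mk_lt_of_not_rel (r := binSetoid _ (j + 1)) (s := binSetoid _ j)
    (fun _ _ h => BinEquiv.mono h j.le_succ)
    ((List.finite_length_eq (Fin 2) n).subset fun _ hw => hw.1) hu hv hj hj'

theorem phiPow_image_strict_increases_general (k : ℕ) (y : ℕ → Fin 2)
    (hy : ¬ UltPeriodic y) :
    ∀ j : ℕ, 1 ≤ j → j ≤ k →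
      {n : ℕ | bc (phiPowInf k y) j n < bc (phiPowInf k y) (j + 1) n}.Infinite := by
  intro j _ hjk
  obtain ⟨c, rfl⟩ : ∃ c, k = j + c := ⟨k - j, by omega⟩
  set z := phiPowInf c y
  have hz : ¬ UltPeriodic z := not_ultPeriodic_phiPowInf c hy
  rw [phiPowInf_add]
  refine Set.infinite_of_injective_forall_mem (f := fun m => 2 ^ j * (m + 1))
    (fun m m' h => by simpa using h) fun m => ?_
  obtain ⟨i, hi⟩ : ∃ i, z i ≠ z (i + (m + 1)) := by
    by_contra! h
    exact hz ⟨m + 1, by omega, 0, fun n _ => (h n).symm⟩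
  exact bc_lt_bc_succ_of_not_binEquiv
    (phiPow_mem_Fac (map_range'_mem_Fac z i (m + 1)) j)
    (phiPow_mem_Fac (map_range'_mem_Fac z (i + 1) (m + 1)) j)
    (binEquiv_phiPow (by simp) j) (not_binEquiv_phiPow (by simp) (count_map_range'_ne_of_ne z hi) j)

theorem phiPow_image_strict_increases (k : ℕ) (hk : 1 ≤ k) (y : ℕ → Fin 2)
    (hy : ¬ UltPeriodic y) :
    ∀ j : ℕ, 1 ≤ j → j ≤ k →
      {n : ℕ | bc (phiPowInf k y) j n < bc (phiPowInf k y) (j + 1) n}.Infinite :=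
  phiPow_image_strict_increases_general k y hy
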